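/- arXiv:1412.1267 — 6 statements merged into one kernel-verified Lean document; each statement's English description precedes it below -/
import Mathlib

section
/- Let λ > 0, M > 0 and δ = λM > 1. Then the equation λe^{pM} = λ + p has a unique negative solution p, given by p = (−δ − W₀(−δe^{−δ}))/M, where W₀ is the principal branch of the Lambert W function. -/
/-!
Writing `p = (-δ - w) / M`, the equation `λ e^{pM} = λ + p` becomes `w eʷ = -δ e^{-δ}`. Its root
`w = -δ` gives `p = 0`; the root `w = W₀(-δ e^{-δ}) ≥ -1 > -δ` gives a negative `p`. Uniqueness:
`p ↦ λ e^{pM} - p` is strictly convex and equals `λ` at `p = 0`, so it takes the value `λ` at most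
once on `(-∞, 0)`.
-/

open Real

/-- Principal branch `W₀` of the Lambert W function: the inverse of `w ↦ w·eʷ` on `[-1, ∞)`. -/
noncomputable def lambertW0 (x : ℝ) : ℝ :=
  Function.invFunOn (fun w => w * Real.exp w) (Set.Ici (-1)) x

theorem StrictConvexOn.eq_of_lt_of_apply_eq {s : Set ℝ} {f : ℝ → ℝ} (hf : StrictConvexOn ℝ s f)
    {c p q : ℝ} (hp : p ∈ s) (hq : q ∈ s) (hc : c ∈ s) (hpc : p < c) (hqc : q < c)
    (hfp : f p = f c) (hfq : f q = f c) : p = q := by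
  wlog hpq : p < q generalizing p q
  · rcases (not_lt.1 hpq).eq_or_lt with h | h
    · exact h.symm
    · exact (this hq hp hqc hpc hfq hfp h).symm
  have hq_mem : q ∈ openSegment ℝ p c := by rw [openSegment_eq_Ioo hpc]; exact ⟨hpq, hqc⟩
  have hlt := hf.lt_on_openSegment hp hc hpc.ne hq_mem
  rw [hfp, hfq, max_self] at hlt
  exact absurd hlt (lt_irrefl _)

theorem strictConvexOn_const_mul_exp_mul {a M : ℝ} (ha : 0 < a) (hM : M ≠ 0) :
    StrictConvexOn ℝ Set.univ (fun p => a * exp (p * M)) := by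
  refine ⟨convex_univ, fun x _ y _ hxy s t hs ht hst => ?_⟩
  have := strictConvexOn_exp.2 (Set.mem_univ (x * M)) (Set.mem_univ (y * M))
    (by simpa [hM] using hxy) hs ht hst
  simp only [smul_eq_mul] at this ⊢
  rw [add_mul, mul_assoc, mul_assoc]
  nlinarith

theorem neg_exp_neg_one_le_mul_exp (y : ℝ) : -exp (-1) ≤ y * exp y := by
  have h := add_one_le_exp (-y - 1)
  have h' : exp (-y - 1) * exp y = exp (-1) := by rw [← exp_add]; ring_nf
  nlinarith [exp_pos y]

theorem mem_image_mul_exp_Ici {x : ℝ} (hx : -exp (-1) ≤ x) :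
    x ∈ (fun w => w * exp w) '' Set.Ici (-1) := by
  have hx0 : 0 ≤ x + 1 := by linarith [exp_lt_one_iff.2 (neg_one_lt_zero : (-1 : ℝ) < 0)]
  have hx_le : x ≤ (x + 1) * exp (x + 1) := by
    nlinarith [one_le_exp hx0]
  obtain ⟨w, hw, rfl⟩ := intermediate_value_Icc (by linarith : (-1 : ℝ) ≤ x + 1)
    (by fun_prop : Continuous fun w => w * exp w).continuousOn
    (⟨by simpa using hx, hx_le⟩ : x ∈ Set.Icc ((-1) * exp (-1)) ((x + 1) * exp (x + 1)))
  exact ⟨w, hw.1, rfl⟩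

theorem lambertW0_mul_exp_lambertW0 {x : ℝ} (hx : -exp (-1) ≤ x) :
    lambertW0 x * exp (lambertW0 x) = x :=
  Function.invFunOn_eq (mem_image_mul_exp_Ici hx)

theorem neg_one_le_lambertW0 {x : ℝ} (hx : -exp (-1) ≤ x) : -1 ≤ lambertW0 x :=
  Function.invFunOn_mem (mem_image_mul_exp_Ici hx)

theorem eq_of_mul_exp_mul_eq_add {lam M p q : ℝ} (hlam : 0 < lam) (hM : M ≠ 0)
    (hp : p < 0) (hq : q < 0) (hfp : lam * exp (p * M) = lam + p)
    (hfq : lam * exp (q * M) = lam + q) : p = q := by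
  have hf := (strictConvexOn_const_mul_exp_mul hlam hM).sub_concaveOn (concaveOn_id convex_univ)
  refine hf.eq_of_lt_of_apply_eq (c := 0) trivial trivial trivial hp hq ?_ ?_ <;>
    simp only [Pi.sub_apply, id_eq, zero_mul, exp_zero, mul_one, sub_zero] <;> linarith

theorem mul_exp_neg_sub_eq_neg {δ w : ℝ} (h : w * exp w = -δ * exp (-δ)) :
    δ * exp (-δ - w) = -w := by
  rw [exp_sub, mul_div_assoc', div_eq_iff (exp_pos w).ne']
  linarith

/-- For `λ > 0`, `M > 0`, `δ = λM > 1`, the equation `λ e^{pM} = λ + p` has a unique negative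
solution `p`, given by `p = (-δ - W₀(-δ e^{-δ}))/M`. -/
theorem stmt0 (lam M : ℝ) (hlam : 0 < lam) (hM : 0 < M)
    (δ : ℝ) (hδdef : δ = lam * M) (hδ : 1 < δ) :
    (∃! p : ℝ, p < 0 ∧ lam * Real.exp (p * M) = lam + p) ∧
    ((-δ - lambertW0 (-δ * Real.exp (-δ))) / M < 0 ∧
      lam * Real.exp (((-δ - lambertW0 (-δ * Real.exp (-δ))) / M) * M)
        = lam + (-δ - lambertW0 (-δ * Real.exp (-δ))) / M) := by
  have hx : -exp (-1) ≤ -δ * exp (-δ) := neg_exp_neg_one_le_mul_exp (-δ)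
  have hw_ge := neg_one_le_lambertW0 hx
  have hw_root := mul_exp_neg_sub_eq_neg (lambertW0_mul_exp_lambertW0 hx)
  set w := lambertW0 (-δ * exp (-δ))
  have hneg : (-δ - w) / M < 0 := div_neg_of_neg_of_pos (by linarith) hM
  have hsol : lam * exp ((-δ - w) / M * M) = lam + (-δ - w) / M := by
    rw [div_mul_cancel₀ _ hM.ne']
    field_simp
    linear_combination hw_root - (exp (-δ - w) - 1) * hδdef
  exact ⟨⟨_, ⟨hneg, hsol⟩, fun q ⟨hq, hfq⟩ =>
    eq_of_mul_exp_mul_eq_add hlam hM.ne' hq hneg hfq hsol⟩, hneg, hsol⟩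
end

section
/- Let λ > 0, M > 0, δ = λM > 1, p < 0 with λe^{pM} = λ + p, and g as in the infinite-buffer limiting density (g(x) = (1/M)(1 − e^{px}) on (0,M], g(x) = (−p/(M(λ+p))) e^{px} on (M,∞)). Then ∫_M^∞ g(x) dx = 1/δ. -/
open Real MeasureTheory

theorem stmt3_general (lam M p : ℝ)
    (hp : p < 0) (heq : lam * Real.exp (p * M) = lam + p) :
    (∫ x in Set.Ioi M, (-p / (M * (lam + p))) * Real.exp (p * x)) = 1 / (lam * M) := by
  have hlam : lam ≠ 0 := by
    rintro rfl
    linarith [heq]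
  have hexp : exp (p * M) / (lam + p) = lam⁻¹ := by
    rw [← heq, div_mul_cancel_right₀ (exp_pos _).ne']
  rw [integral_const_mul, integral_exp_mul_Ioi hp]
  calc -p / (M * (lam + p)) * (-exp (p * M) / p) = exp (p * M) / (M * (lam + p)) := by
        rw [div_mul_div_comm, neg_mul_neg, mul_comm _ p, mul_div_mul_left _ _ hp.ne]
    _ = 1 / (lam * M) := by rw [mul_comm M, ← div_div, hexp]; ring

/-- The transmission probability: with the infinite-buffer limiting density,
`∫_M^∞ g(x) dx = 1/δ` where `δ = λM`. -/
theorem stmt3 (lam M p : ℝ) (hlam : 0 < lam) (hM : 0 < M) (hδ : 1 < lam * M)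
    (hp : p < 0) (heq : lam * Real.exp (p * M) = lam + p) :
    (∫ x in Set.Ioi M, (-p / (M * (lam + p))) * Real.exp (p * x)) = 1 / (lam * M) :=
  stmt3_general lam M p hp heq
end

section
/- Let λ > 0, M > 0, δ = λM > 1 and p < 0 satisfy λe^{pM} = λ + p. Set g₁(x) = (1/M)(1 − e^{px}) for 0 ≤ x ≤ M and g₂(x) = k e^{px} for x ≥ M with k = −p/(M(λ+p)). Then for all x with 0 ≤ x ≤ M, g₁(x) = ∫₀^x λe^{−λ(x−u)} g₁(u) du + ∫_M^{M+x} λe^{−λ(x−u+M)} g₂(u) du. -/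
open Real MeasureTheory

lemma int_exp_aux (c a b : ℝ) (hc : c ≠ 0) :
    ∫ u in a..b, Real.exp (c * u) = (Real.exp (c * b) - Real.exp (c * a)) / c := by
  rw [intervalIntegral.integral_comp_mul_left (fun y => Real.exp y) hc, integral_exp]
  rw [smul_eq_mul]
  field_simp

/-- First balance (integral) equation satisfied by the infinite-buffer limiting density on `[0,M]`:
`g₁(x) = ∫₀^x λe^{-λ(x-u)} g₁(u) du + ∫_M^{M+x} λe^{-λ(x-u+M)} g₂(u) du`. -/
theorem stmt4 (lam M p : ℝ) (hlam : 0 < lam) (hM : 0 < M) (hδ : 1 < lam * M)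
    (hp : p < 0) (heq : lam * Real.exp (p * M) = lam + p)
    (k : ℝ) (hk : k = -p / (M * (lam + p)))
    (g₁ g₂ : ℝ → ℝ)
    (hg₁ : ∀ x, 0 ≤ x → x ≤ M → g₁ x = (1 / M) * (1 - Real.exp (p * x)))
    (hg₂ : ∀ x, M ≤ x → g₂ x = k * Real.exp (p * x)) :
    ∀ x, 0 ≤ x → x ≤ M →
      g₁ x = (∫ u in (0 : ℝ)..x, lam * Real.exp (-lam * (x - u)) * g₁ u) +
        (∫ u in M..(M + x), lam * Real.exp (-lam * (x - u + M)) * g₂ u) := by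
  intro x hx0 hxM
  have hlp : 0 < lam + p := by rw [← heq]; positivity
  have hlp' : lam + p ≠ 0 := ne_of_gt hlp
  set C1 : ℝ := lam / M * Real.exp (-(lam * x)) with hC1
  set C2 : ℝ := lam * k * Real.exp (-(lam * (x + M))) with hC2
  have h1 : (∫ u in (0 : ℝ)..x, lam * Real.exp (-lam * (x - u)) * g₁ u)
      = C1 * ((Real.exp (lam * x) - 1) / lam)
        - C1 * ((Real.exp ((lam + p) * x) - 1) / (lam + p)) := by
    rw [intervalIntegral.integral_congr
      (g := fun u => C1 * Real.exp (lam * u) - C1 * Real.exp ((lam + p) * u))]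
    · rw [intervalIntegral.integral_sub
        (Continuous.intervalIntegrable (by fun_prop) _ _)
        (Continuous.intervalIntegrable (by fun_prop) _ _),
        intervalIntegral.integral_const_mul, intervalIntegral.integral_const_mul,
        int_exp_aux _ _ _ (ne_of_gt hlam), int_exp_aux _ _ _ hlp']
      simp [mul_zero, Real.exp_zero]
    · intro u hu
      rw [Set.uIcc_of_le hx0] at hu
      show lam * Real.exp (-lam * (x - u)) * g₁ u = C1 * Real.exp (lam * u) - C1 * Real.exp ((lam + p) * u)
      rw [hg₁ u hu.1 (hu.2.trans hxM), hC1,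
        show -lam * (x - u) = -(lam * x) + lam * u by ring, Real.exp_add,
        show (lam + p) * u = lam * u + p * u by ring, Real.exp_add]
      ring
  have h2 : (∫ u in M..(M + x), lam * Real.exp (-lam * (x - u + M)) * g₂ u)
      = C2 * ((Real.exp ((lam + p) * (M + x)) - Real.exp ((lam + p) * M)) / (lam + p)) := by
    rw [intervalIntegral.integral_congr
      (g := fun u => C2 * Real.exp ((lam + p) * u))]
    · rw [intervalIntegral.integral_const_mul, int_exp_aux _ _ _ hlp']
    · intro u hu
      rw [Set.uIcc_of_le (by linarith)] at hu
      show lam * Real.exp (-lam * (x - u + M)) * g₂ u = C2 * Real.exp ((lam + p) * u)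
      rw [hg₂ u hu.1, hC2,
        show -lam * (x - u + M) = -(lam * (x + M)) + lam * u by ring, Real.exp_add,
        show (lam + p) * u = lam * u + p * u by ring, Real.exp_add]
      ring
  rw [h1, h2, hg₁ x hx0 hxM, hC1, hC2, hk]
  have hA : Real.exp (lam * x) ≠ 0 := Real.exp_ne_zero _
  have hD : Real.exp (lam * M) ≠ 0 := Real.exp_ne_zero _
  have e1 : Real.exp (-(lam * x)) = (Real.exp (lam * x))⁻¹ := by
    rw [Real.exp_neg]
  have e2 : Real.exp ((lam + p) * x) = Real.exp (lam * x) * Real.exp (p * x) := by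
    rw [← Real.exp_add]; ring_nf
  have e3 : Real.exp (-(lam * (x + M))) = (Real.exp (lam * x))⁻¹ * (Real.exp (lam * M))⁻¹ := by
    rw [← Real.exp_neg, ← Real.exp_neg, ← Real.exp_add]; ring_nf
  have e4 : Real.exp ((lam + p) * (M + x))
      = Real.exp (lam * M) * Real.exp (p * M) * Real.exp (lam * x) * Real.exp (p * x) := by
    rw [← Real.exp_add, ← Real.exp_add, ← Real.exp_add]; ring_nf
  have e5 : Real.exp ((lam + p) * M) = Real.exp (lam * M) * Real.exp (p * M) := by
    rw [← Real.exp_add]; ring_nf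
  have e6 : Real.exp (p * M) = (lam + p) / lam := by
    field_simp at heq ⊢; linarith
  rw [e1, e2, e3, e4, e5, e6]
  field_simp
  ring
end

section
/- Let λ > 0, M > 0, δ = λM > 1 and p < 0 satisfy λe^{pM} = λ + p. Set g₁(x) = (1/M)(1 − e^{px}) for 0 ≤ x ≤ M and g₂(x) = k e^{px} with k = −p/(M(λ+p)). Then for all x ≥ M, g₂(x) = ∫₀^M λe^{−λ(x−u)} g₁(u) du + ∫_M^{M+x} λe^{−λ(x−u+M)} g₂(u) du. -/
/-!
Every integrand is a combination of exponentials of affine functions of `u`, so both integrals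
are explicit: the first equals `k e^{-λx}` and the second `k e^{px} - k e^{-λx}`. The relation
`λ e^{pM} = λ + p` is exactly what makes the boundary terms collapse to these values.
-/

open Real MeasureTheory

theorem integral_exp_mul_add {α : ℝ} (hα : α ≠ 0) (a b β : ℝ) :
    ∫ u in a..b, exp (α * u + β) = (exp (α * b + β) - exp (α * a + β)) / α := by
  rw [intervalIntegral.integral_comp_mul_add (fun u => exp u) hα, integral_exp, smul_eq_mul,
    inv_mul_eq_div]

theorem add_ne_zero_of_mul_exp_eq {lam p M : ℝ} (hlam : lam ≠ 0)
    (heq : lam * exp (p * M) = lam + p) : lam + p ≠ 0 :=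
  heq ▸ mul_ne_zero hlam (exp_ne_zero _)

theorem integral_kernel_mul_one_sub_exp {lam M p : ℝ} (hlam : lam ≠ 0) (hM : M ≠ 0)
    (heq : lam * exp (p * M) = lam + p) (x : ℝ) :
    ∫ u in (0 : ℝ)..M, lam * exp (-lam * (x - u)) * ((1 / M) * (1 - exp (p * u))) =
      -p / (M * (lam + p)) * exp (-lam * x) := by
  have hlp := add_ne_zero_of_mul_exp_eq hlam heq
  have hsplit : ∀ u, lam * exp (-lam * (x - u)) * ((1 / M) * (1 - exp (p * u))) =
      lam / M * exp (lam * u + -lam * x) - lam / M * exp ((lam + p) * u + -lam * x) := by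
    intro u
    rw [show lam * u + -lam * x = -lam * (x - u) by ring,
      show (lam + p) * u + -lam * x = -lam * (x - u) + p * u by ring, exp_add (-lam * (x - u))]
    ring
  simp_rw [hsplit]
  rw [intervalIntegral.integral_sub (Continuous.intervalIntegrable (by fun_prop) _ _)
      (Continuous.intervalIntegrable (by fun_prop) _ _),
    intervalIntegral.integral_const_mul, intervalIntegral.integral_const_mul,
    integral_exp_mul_add hlam, integral_exp_mul_add hlp]
  have hpM : exp (p * M) = (lam + p) / lam := by rw [eq_div_iff hlam, mul_comm, heq]
  rw [show (lam + p) * M + -lam * x = p * M + (lam * M + -lam * x) by ring, exp_add (p * M), hpM]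
  simp only [mul_zero, zero_add]
  field_simp
  ring

theorem integral_kernel_mul_exp {lam M p : ℝ} (hlam : lam ≠ 0)
    (heq : lam * exp (p * M) = lam + p) (k x : ℝ) :
    ∫ u in M..(M + x), lam * exp (-lam * (x - u + M)) * (k * exp (p * u)) =
      k * exp (p * x) - k * exp (-lam * x) := by
  have hlp := add_ne_zero_of_mul_exp_eq hlam heq
  have hmerge : ∀ u, lam * exp (-lam * (x - u + M)) * (k * exp (p * u)) =
      lam * k * exp ((lam + p) * u + -lam * (x + M)) := by
    intro u
    rw [show (lam + p) * u + -lam * (x + M) = -lam * (x - u + M) + p * u by ring, exp_add]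
    ring
  simp_rw [hmerge]
  rw [intervalIntegral.integral_const_mul, integral_exp_mul_add hlp,
    show (lam + p) * (M + x) + -lam * (x + M) = p * M + p * x by ring,
    show (lam + p) * M + -lam * (x + M) = p * M + -lam * x by ring, exp_add, exp_add, ← heq]
  field_simp

theorem stmt5_general (lam M p : ℝ) (hlam : 0 < lam) (hM : 0 < M)
    (heq : lam * Real.exp (p * M) = lam + p)
    (k : ℝ) (hk : k = -p / (M * (lam + p)))
    (g₁ g₂ : ℝ → ℝ)
    (hg₁ : ∀ x, 0 ≤ x → x ≤ M → g₁ x = (1 / M) * (1 - Real.exp (p * x)))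
    (hg₂ : ∀ x, g₂ x = k * Real.exp (p * x)) :
    ∀ x, M ≤ x →
      g₂ x = (∫ u in (0 : ℝ)..M, lam * Real.exp (-lam * (x - u)) * g₁ u) +
        (∫ u in M..(M + x), lam * Real.exp (-lam * (x - u + M)) * g₂ u) := by
  intro x _
  have hg₁_on : ∀ u ∈ Set.uIcc 0 M, lam * exp (-lam * (x - u)) * g₁ u =
      lam * exp (-lam * (x - u)) * ((1 / M) * (1 - exp (p * u))) := by
    intro u hu
    rw [Set.uIcc_of_le hM.le] at hu
    rw [hg₁ u hu.1 hu.2]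
  rw [intervalIntegral.integral_congr hg₁_on, funext hg₂,
    integral_kernel_mul_one_sub_exp hlam.ne' hM.ne' heq, integral_kernel_mul_exp hlam.ne' heq, ← hk]
  ring

/-- Second balance (integral) equation satisfied by the infinite-buffer limiting density on
`[M, ∞)`: `g₂(x) = ∫₀^M λe^{-λ(x-u)} g₁(u) du + ∫_M^{M+x} λe^{-λ(x-u+M)} g₂(u) du`. -/
theorem stmt5 (lam M p : ℝ) (hlam : 0 < lam) (hM : 0 < M) (hδ : 1 < lam * M)
    (hp : p < 0) (heq : lam * Real.exp (p * M) = lam + p)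
    (k : ℝ) (hk : k = -p / (M * (lam + p)))
    (g₁ g₂ : ℝ → ℝ)
    (hg₁ : ∀ x, 0 ≤ x → x ≤ M → g₁ x = (1 / M) * (1 - Real.exp (p * x)))
    (hg₂ : ∀ x, g₂ x = k * Real.exp (p * x)) :
    ∀ x, M ≤ x →
      g₂ x = (∫ u in (0 : ℝ)..M, lam * Real.exp (-lam * (x - u)) * g₁ u) +
        (∫ u in M..(M + x), lam * Real.exp (-lam * (x - u + M)) * g₂ u) :=
  stmt5_general lam M p hlam hM heq k hk g₁ g₂ hg₁ hg₂
end

section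
/- Let λ > 0, M > 0, p < 0 with λe^{pM} = λ + p, and k = −p/(M(λ+p)). Then ∫₀^M e^{λu} · (1/M)(1 − e^{pu}) du = k/λ. -/
open Real MeasureTheory

/- The integral splits into two exponential integrals with rates `λ` and `λ + p`; the relation
`λ e^{pM} = λ + p` says `e^{(λ+p)M}/(λ+p) = e^{λM}/λ`, so the boundary terms at `M` cancel and only
`(1/M)(1/(λ+p) - 1/λ) = k/λ` survives from the boundary terms at `0`. -/

theorem integral_exp_mul (a b c : ℝ) (hc : c ≠ 0) :
    ∫ x in a..b, exp (c * x) = (exp (c * b) - exp (c * a)) / c := by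
  rw [intervalIntegral.integral_comp_mul_left (fun x => exp x) hc, integral_exp, smul_eq_mul,
    inv_mul_eq_div]

theorem stmt6_general (lam M p : ℝ) (hlam : 0 < lam)
    (heq : lam * Real.exp (p * M) = lam + p)
    (k : ℝ) (hk : k = -p / (M * (lam + p))) :
    (∫ u in (0 : ℝ)..M, Real.exp (lam * u) * ((1 / M) * (1 - Real.exp (p * u))))
      = k / lam := by
  have hlp : lam + p ≠ 0 := by
    rw [← heq]
    positivity
  have hsplit : ∀ u, exp (lam * u) * ((1 / M) * (1 - exp (p * u)))
      = (1 / M) * (exp (lam * u) - exp ((lam + p) * u)) := fun u => by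
    rw [add_mul, exp_add]
    ring
  have hboundary : exp ((lam + p) * M) / (lam + p) = exp (lam * M) / lam := by
    rw [add_mul, exp_add, ← heq]
    field_simp
  simp_rw [hsplit]
  rw [intervalIntegral.integral_const_mul, intervalIntegral.integral_sub
      (Continuous.intervalIntegrable (by fun_prop) _ _)
      (Continuous.intervalIntegrable (by fun_prop) _ _),
    integral_exp_mul _ _ _ hlam.ne', integral_exp_mul _ _ _ hlp, sub_div, sub_div, hboundary,
    mul_zero, mul_zero, exp_zero, hk]
  field_simp
  ring

/-- Consistency condition: `∫₀^M e^{λu} (1/M)(1 - e^{pu}) du = k/λ`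
with `k = -p/(M(λ+p))` and `λ e^{pM} = λ + p`. -/
theorem stmt6 (lam M p : ℝ) (hlam : 0 < lam) (hM : 0 < M)
    (hp : p < 0) (heq : lam * Real.exp (p * M) = lam + p)
    (k : ℝ) (hk : k = -p / (M * (lam + p))) :
    (∫ u in (0 : ℝ)..M, Real.exp (lam * u) * ((1 / M) * (1 - Real.exp (p * u))))
      = k / lam :=
  stmt6_general lam M p hlam heq k hk
end

section
/- Let {X(i)} be i.i.d. nonnegative with mean X̄ and let B(i+1) = B(i) − M·1{B(i)>M} + X(i) (infinite buffer, K = ∞) with M < X̄ and B(0) ≥ 0. Then almost surely there exists a finite (random) time N such that B(i) > M for all i ≥ N; consequently P_UL(i) = M for all i ≥ N almost surely. -/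
/-!
The uplink drains at most `M` per slot, so `B n ≥ ∑_{i<n} X i - n M`. By the strong law of large
numbers the right-hand side is `n ((∑_{i<n} X i) / n - M) ≈ n (X̄ - M) → ∞` almost surely, hence
`B n` eventually stays above `M`.
-/

open MeasureTheory ProbabilityTheory Filter Finset Topology

theorem sum_range_sub_mul_le_of_le_succ {b x : ℕ → ℝ} {M : ℝ} (h0 : 0 ≤ b 0)
    (hstep : ∀ i, b i - M + x i ≤ b (i + 1)) (n : ℕ) :
    ∑ i ∈ range n, x i - n * M ≤ b n := by
  induction n with
  | zero => simpa using h0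
  | succ n ih =>
    rw [sum_range_succ, Nat.cast_succ]
    linarith [hstep n]

theorem tendsto_sum_range_sub_mul_atTop {x : ℕ → ℝ} {L M : ℝ}
    (hx : Tendsto (fun n : ℕ => (∑ i ∈ range n, x i) / n) atTop (𝓝 L)) (hML : M < L) :
    Tendsto (fun n : ℕ => ∑ i ∈ range n, x i - n * M) atTop atTop := by
  have h := tendsto_natCast_atTop_atTop.atTop_mul_pos (sub_pos.2 hML) (hx.sub_const M)
  refine h.congr' ?_
  filter_upwards [eventually_ne_atTop 0] with n hn
  field_simp

theorem stmt18_general {Ω : Type*} [MeasureSpace Ω]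
    (X : ℕ → Ω → ℝ)
    (hindep : iIndepFun X ℙ)
    (hident : ∀ i, IdentDistrib (X i) (X 0) ℙ ℙ)
    (hint : Integrable (X 0) ℙ)
    (Xbar M : ℝ) (hXbar : Xbar = ∫ ω, X 0 ω ∂ℙ) (hM : 0 < M) (hMX : M < Xbar)
    (B : ℕ → Ω → ℝ) (hB0 : ∀ ω, 0 ≤ B 0 ω)
    (hrec : ∀ i, ∀ ω,
      B (i + 1) ω = B i ω - M * (if M < B i ω then 1 else 0) + X i ω) :
    ∀ᵐ ω ∂(ℙ : Measure Ω), ∃ N : ℕ, ∀ i ≥ N,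
      M < B i ω ∧ M * (if M < B i ω then 1 else 0) = M := by
  filter_upwards [strong_law_ae_real X hint (fun i j hij => hindep.indepFun hij) hident]
    with ω hω
  have hstep (i : ℕ) : B i ω - M + X i ω ≤ B (i + 1) ω := by
    rw [hrec i ω]
    split_ifs <;> linarith
  have hB : Tendsto (fun n => B n ω) atTop atTop :=
    tendsto_atTop_mono (sum_range_sub_mul_le_of_le_succ (hB0 ω) hstep)
      (tendsto_sum_range_sub_mul_atTop hω (hXbar ▸ hMX))
  obtain ⟨N, hN⟩ := (hB.eventually_gt_atTop M).exists_forall_of_atTop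
  exact ⟨N, fun i hi => ⟨hN i hi, by simp [hN i hi]⟩⟩

/-- For an infinite buffer with i.i.d. nonnegative harvesting `X(i)` of mean `X̄ > M`,
almost surely there is a finite time `N` after which `B(i) > M` for all `i ≥ N`;
consequently `P_UL(i) = M·1{B(i) > M} = M` for all `i ≥ N` almost surely. -/
theorem stmt18 {Ω : Type*} [MeasureSpace Ω] [IsProbabilityMeasure (ℙ : Measure Ω)]
    (X : ℕ → Ω → ℝ) (hmeas : ∀ i, Measurable (X i))
    (hindep : iIndepFun X ℙ)
    (hident : ∀ i, IdentDistrib (X i) (X 0) ℙ ℙ)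
    (hnonneg : ∀ i, ∀ ω, 0 ≤ X i ω)
    (hint : Integrable (X 0) ℙ)
    (Xbar M : ℝ) (hXbar : Xbar = ∫ ω, X 0 ω ∂ℙ) (hM : 0 < M) (hMX : M < Xbar)
    (B : ℕ → Ω → ℝ) (hB0 : ∀ ω, 0 ≤ B 0 ω)
    (hrec : ∀ i, ∀ ω,
      B (i + 1) ω = B i ω - M * (if M < B i ω then 1 else 0) + X i ω) :
    ∀ᵐ ω ∂(ℙ : Measure Ω), ∃ N : ℕ, ∀ i ≥ N,
      M < B i ω ∧ M * (if M < B i ω then 1 else 0) = M :=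
  stmt18_general X hindep hident hint Xbar M hXbar hM hMX B hB0 hrec
end
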